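/- arXiv:2009.14275 — 4 statements merged into one kernel-verified Lean document; each statement's English description precedes it below -/
import Mathlib

section
/- Every numerical h-rectangle r = (a ≤ b ≤ c ≤ d) with d = b + c - a, 0 ≤ a and d ≤ |h| for the vector h = (1,1,…,1) ∈ ℕ^n (n ≥ 2) with a < b (i.e., every 3- or 4-rectangle) is realizable: there exist vertices u ∈ S_a(h), u' ∈ S_b(h), v' ∈ S_c(h), v ∈ S_d(h) of {-1,1}^n with u + v = u' + v' and all four vertices distinct. In other words, the all-ones vector is a primitive vector. -/
open Finset

/-- A vertex of the cube `{-1,1}^n`, represented over `ℤ`. -/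
def cubeVec {n : ℕ} (v : Fin n → ℤ) : Prop := ∀ i, v i = 1 ∨ v i = -1

/-- The `a`-level of a nonnegative integer vector `h`:
vertices `v` of the cube with `h·v = |h| - 2a`. -/
def level {n : ℕ} (h : Fin n → ℕ) (a : ℤ) : Set (Fin n → ℤ) :=
  {v | cubeVec v ∧ ∑ i, (h i : ℤ) * v i = (∑ i, (h i : ℤ)) - 2 * a}
/-- The numerical `h`-rectangle `(a ≤ b ≤ c ≤ d)` is realizable: there are pairwise
distinct cube vertices in the four levels forming a rectangle. -/
def Realizable {n : ℕ} (h : Fin n → ℕ) (a b c d : ℤ) : Prop :=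
  ∃ u u' v' v : Fin n → ℤ,
    u ∈ level h a ∧ u' ∈ level h b ∧ v' ∈ level h c ∧ v ∈ level h d ∧
    u + v = u' + v' ∧
    u ≠ u' ∧ u ≠ v' ∧ u ≠ v ∧ u' ≠ v' ∧ u' ≠ v ∧ v' ≠ v

/-- `h` is a primitive vector: every 3- or 4-rectangle (those with `a < b`) is realizable. -/
def Primitive {n : ℕ} (h : Fin n → ℕ) : Prop :=
  ∀ a b c d : ℤ, a < b → b ≤ c → c ≤ d → d = b + c - a → 0 ≤ a →
    d ≤ (∑ i, (h i : ℤ)) → Realizable h a b c d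

/-!
A vertex of `{-1,1}^n` is the sign vector of the set `S` of its `-1` coordinates, and it lies
in level `#S` of the all-ones vector. For any sets `X, Y` the modular identity
`𝟙_{X ∩ Y} + 𝟙_{X ∪ Y} = 𝟙_X + 𝟙_Y` makes the sign vectors of `X ∩ Y, X, Y, X ∪ Y` a rectangle
in the levels `#(X ∩ Y), #X, #Y, #(X ∪ Y)`, and sets with `#X = b`, `#Y = c`, `#(X ∩ Y) = a`
exist as soon as `b + c - a ≤ n`. The four sets are pairwise distinct when `a < b ≤ c`.
-/

def signVec {n : ℕ} (S : Finset (Fin n)) : Fin n → ℤ := fun i => if i ∈ S then -1 else 1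

section signVec

variable {n : ℕ}

lemma signVec_injective : Function.Injective (signVec (n := n)) := by
  intro S T h
  ext i
  have := congrFun h i
  simp only [signVec] at this
  split_ifs at this <;> simp_all

lemma signVec_mem_level (S : Finset (Fin n)) : signVec S ∈ level (fun _ => 1) #S := by
  refine ⟨fun i => by unfold signVec; split_ifs <;> simp, ?_⟩
  have hsplit : ∀ i, signVec S i = 1 - 2 * if i ∈ S then 1 else 0 := fun i => by
    unfold signVec; split_ifs <;> norm_num
  simp only [Nat.cast_one, one_mul, hsplit, sum_sub_distrib, ← mul_sum, sum_boole,
    filter_mem_eq_inter, univ_inter]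

lemma signVec_inter_add_signVec_union (X Y : Finset (Fin n)) :
    signVec (X ∩ Y) + signVec (X ∪ Y) = signVec X + signVec Y := by
  funext i
  simp only [Pi.add_apply, signVec, mem_inter, mem_union]
  split_ifs <;> tauto

end signVec

lemma exists_finsets_with_cards {α : Type*} [Fintype α] [DecidableEq α] {a b c : ℕ}
    (hab : a ≤ b) (hac : a ≤ c) (hcard : b + c ≤ Fintype.card α + a) :
    ∃ X Y : Finset α, #X = b ∧ #Y = c ∧ #(X ∩ Y) = a := by
  obtain ⟨X, -, hX⟩ := exists_subset_card_eq (s := (univ : Finset α)) (n := b)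
    (by rw [card_univ]; omega)
  obtain ⟨Z, hZX, hZ⟩ := exists_subset_card_eq (s := X) (n := a) (by omega)
  obtain ⟨W, hWX, hW⟩ := exists_subset_card_eq (s := Xᶜ) (n := c - a)
    (by rw [card_compl]; omega)
  have hdisj : Disjoint X W := disjoint_left.2 fun i hiX hiW => (mem_compl.1 (hWX hiW)) hiX
  refine ⟨X, Z ∪ W, hX, ?_, ?_⟩
  · rw [card_union_of_disjoint (hdisj.mono_left hZX)]
    omega
  · rw [inter_union_distrib_left, inter_eq_right.2 hZX, disjoint_iff_inter_eq_empty.1 hdisj,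
      union_empty, hZ]

lemma realizable_allOnes_inter_union {n : ℕ} {X Y : Finset (Fin n)}
    (hlt : #(X ∩ Y) < #X) (hle : #X ≤ #Y) :
    Realizable (fun _ : Fin n => 1) #(X ∩ Y) #X #Y #(X ∪ Y) := by
  have hne : ∀ S T : Finset (Fin n), #S ≠ #T → signVec S ≠ signVec T :=
    fun S T h e => h (congrArg card (signVec_injective e))
  have hXY : X ≠ Y := fun e => by simp [e] at hlt
  have hunion := card_union_add_card_inter X Y
  refine ⟨signVec (X ∩ Y), signVec X, signVec Y, signVec (X ∪ Y),
    signVec_mem_level _, signVec_mem_level _, signVec_mem_level _, signVec_mem_level _,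
    signVec_inter_add_signVec_union X Y, hne _ _ (by omega), hne _ _ (by omega),
    hne _ _ (by omega), signVec_injective.ne hXY, hne _ _ (by omega), hne _ _ (by omega)⟩

theorem allOnes_primitive_general (n : ℕ) :
    Primitive (fun _ : Fin n => (1 : ℕ)) := by
  intro a b c d hab hbc hcd hd ha hdn
  lift a to ℕ using ha
  lift b to ℕ using by omega
  lift c to ℕ using by omega
  simp only [Nat.cast_one, sum_const, card_univ, Fintype.card_fin, nsmul_eq_mul, mul_one]
    at hdn
  obtain ⟨X, Y, hX, hY, hXY⟩ :=
    exists_finsets_with_cards (α := Fin n) (a := a) (b := b) (c := c) (by omega) (by omega)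
      (by rw [Fintype.card_fin]; omega)
  have hunion := card_union_add_card_inter X Y
  have := realizable_allOnes_inter_union (X := X) (Y := Y) (by omega) (by omega)
  rwa [hX, hY, hXY, show (#(X ∪ Y) : ℤ) = d by omega] at this

/-- the all-ones vector of `ℕ^n` (`n ≥ 2`) is primitive. -/
theorem allOnes_primitive (n : ℕ) (hn : 2 ≤ n) :
    Primitive (fun _ : Fin n => (1 : ℕ)) :=
  allOnes_primitive_general n
end

section
/- If h ∈ ℕ^n is a primitive vector, then for every a with 0 ≤ a ≤ |h| the level S_a(h) is nonempty, and for every a with 0 < a < |h| the level S_a(h) contains at least two elements. -/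
open Finset

theorem one_mem_level_zero {n : ℕ} (h : Fin n → ℕ) : (fun _ => 1) ∈ level h 0 :=
  ⟨fun _ => Or.inl rfl, by simp⟩

theorem neg_one_mem_level_sum {n : ℕ} (h : Fin n → ℕ) :
    (fun _ => -1) ∈ level h (∑ i, (h i : ℤ)) :=
  ⟨fun _ => Or.inr rfl, by simp only [mul_neg_one, sum_neg_distrib]; ring⟩

theorem Realizable.exists_ne_mem_level {n : ℕ} {h : Fin n → ℕ} {a b d : ℤ}
    (hr : Realizable h a b b d) : ∃ x y, x ∈ level h b ∧ y ∈ level h b ∧ x ≠ y := by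
  obtain ⟨_, u', v', _, _, hu', hv', _, _, _, _, _, hne, _, _⟩ := hr
  exact ⟨u', v', hu', hv', hne⟩

/-- The two middle corners of the square rectangle `(a', a, a, 2a - a')`, with `a'` as small
as `0 ≤ a'` and `2a - a' ≤ |h|` allow, are distinct points of level `a`. -/
theorem Primitive.exists_ne_mem_level {n : ℕ} {h : Fin n → ℕ} (hp : Primitive h) {a : ℤ}
    (ha : 0 < a) (haS : a < ∑ i, (h i : ℤ)) :
    ∃ x y, x ∈ level h a ∧ y ∈ level h a ∧ x ≠ y := by
  set a' := max 0 (2 * a - ∑ i, (h i : ℤ))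
  have ha' : 0 ≤ a' := le_max_left _ _
  have ha'a : a' < a := max_lt ha (by omega)
  have hd : 2 * a - a' ≤ ∑ i, (h i : ℤ) := by
    have := le_max_right 0 (2 * a - ∑ i, (h i : ℤ))
    omega
  exact (hp a' a a (2 * a - a') ha'a le_rfl (by omega) (by ring) ha' hd).exists_ne_mem_level

theorem Primitive.level_nonempty {n : ℕ} {h : Fin n → ℕ} (hp : Primitive h) {a : ℤ}
    (ha : 0 ≤ a) (haS : a ≤ ∑ i, (h i : ℤ)) : (level h a).Nonempty := by
  obtain rfl | ha := ha.eq_or_lt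
  · exact ⟨_, one_mem_level_zero h⟩
  obtain rfl | haS := haS.eq_or_lt
  · exact ⟨_, neg_one_mem_level_sum h⟩
  obtain ⟨x, -, hx, -⟩ := hp.exists_ne_mem_level ha haS
  exact ⟨x, hx⟩

/-- all levels of a primitive vector are nonempty, and interior levels
have at least two elements. -/
theorem primitive_levels_nonempty (n : ℕ) (h : Fin n → ℕ) (hp : Primitive h) :
    (∀ a : ℤ, 0 ≤ a → a ≤ (∑ i, (h i : ℤ)) → (level h a).Nonempty) ∧
    (∀ a : ℤ, 0 < a → a < (∑ i, (h i : ℤ)) →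
      ∃ x y, x ∈ level h a ∧ y ∈ level h a ∧ x ≠ y) :=
  ⟨fun _ ha haS => hp.level_nonempty ha haS, fun _ ha haS => hp.exists_ne_mem_level ha haS⟩
end

section
/- If h ∈ ℕ^n is a primitive vector and g_0 ∈ ℕ satisfies 0 ≤ g_0 ≤ |h|/2 + 1, then the vector g = (h, g_0) ∈ ℕ^{n+1} is a primitive vector. -/
/-!
Appending `g₀` doubles each vertex `x ∈ S_a(h)` into `(x, 1) ∈ S_a(g)` and
`(x, -1) ∈ S_{a+g₀}(g)`, and the relation `u + v = u' + v'` survives doubling whenever the new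
last coordinates are all equal, or constant along the rows, or constant along the columns of
`[[u, u'], [v', v]]`. Hence a `g`-rectangle is realized by lifting an `h`-rectangle (up to a
symmetry of the square) whose levels differ from the given ones by `0` or `g₀` in one of these
patterns. When that `h`-rectangle would be degenerate, the `g`-rectangle is
`(e, e + g₀, f, f + g₀)` up to transposition and is realized by doubling two vertices at levels
`e ≠ f`, which exist because `h` is primitive. The bound `g₀ ≤ |h|/2 + 1` makes the cases
exhaustive: in the last one it forces `g₀ ≤ b`.
-/

open Finset

theorem Fin.snoc_add_snoc {α : Type*} [Add α] {n : ℕ} (x y : Fin n → α) (s t : α) :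
    (Fin.snoc x s : Fin (n + 1) → α) + Fin.snoc y t = Fin.snoc (x + y) (s + t) := by
  funext i
  refine Fin.lastCases ?_ (fun j => ?_) i <;> simp

variable {n : ℕ} {h : Fin n → ℕ} {g : ℕ}

theorem sum_snoc_cast :
    ∑ i, ((Fin.snoc h g : Fin (n + 1) → ℕ) i : ℤ) = ∑ i, (h i : ℤ) + g := by
  simp [Fin.sum_univ_castSucc]

theorem cubeVec.snoc {x : Fin n → ℤ} {t : ℤ} (hx : cubeVec x) (ht : t = 1 ∨ t = -1) :
    cubeVec (Fin.snoc x t : Fin (n + 1) → ℤ) := by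
  intro i
  refine Fin.lastCases ?_ (fun j => ?_) i
  · simpa using ht
  · simpa using hx j

theorem snoc_mem_level_snoc_one {x : Fin n → ℤ} {a : ℤ} (hx : x ∈ level h a) :
    (Fin.snoc x 1 : Fin (n + 1) → ℤ) ∈ level (Fin.snoc h g) a := by
  refine ⟨hx.1.snoc (.inl rfl), ?_⟩
  simp only [Fin.sum_univ_castSucc, Fin.snoc_castSucc, hx.2, Fin.snoc_last, mul_one]
  ring

theorem snoc_mem_level_snoc_neg_one {x : Fin n → ℤ} {a : ℤ} (hx : x ∈ level h a) :
    (Fin.snoc x (-1) : Fin (n + 1) → ℤ) ∈ level (Fin.snoc h g) (a + g) := by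
  refine ⟨hx.1.snoc (.inr rfl), ?_⟩
  simp only [Fin.sum_univ_castSucc, Fin.snoc_castSucc, hx.2, Fin.snoc_last, mul_neg, mul_one]
  ring

theorem ne_of_mem_level {x y : Fin n → ℤ} {e f : ℤ} (hx : x ∈ level h e) (hy : y ∈ level h f)
    (hef : e ≠ f) : x ≠ y := by
  rintro rfl
  exact hef (by linarith [hx.2, hy.2])

namespace Realizable

variable {a b c d : ℤ}

theorem transpose (H : Realizable h a b c d) : Realizable h a c b d := by
  obtain ⟨u, u', v', v, hu, hu', hv', hv, hsum, h1, h2, h3, h4, h5, h6⟩ := H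
  exact ⟨u, v', u', v, hu, hv', hu', hv, hsum.trans (add_comm _ _), h2, h1, h3, h4.symm, h6, h5⟩

theorem swap_columns (H : Realizable h a b c d) : Realizable h b a d c := by
  obtain ⟨u, u', v', v, hu, hu', hv', hv, hsum, h1, h2, h3, h4, h5, h6⟩ := H
  exact ⟨u', u, v, v', hu', hu, hv, hv', hsum.symm, h1.symm, h5, h4, h3, h2, h6.symm⟩

theorem snoc_one (H : Realizable h a b c d) : Realizable (Fin.snoc h g) a b c d := by
  obtain ⟨u, u', v', v, hu, hu', hv', hv, hsum, h1, h2, h3, h4, h5, h6⟩ := H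
  refine ⟨Fin.snoc u 1, Fin.snoc u' 1, Fin.snoc v' 1, Fin.snoc v 1,
    snoc_mem_level_snoc_one hu, snoc_mem_level_snoc_one hu', snoc_mem_level_snoc_one hv',
    snoc_mem_level_snoc_one hv, by rw [Fin.snoc_add_snoc, Fin.snoc_add_snoc, hsum], ?_⟩
  simp_all

theorem snoc_neg_one (H : Realizable h a b c d) :
    Realizable (Fin.snoc h g) (a + g) (b + g) (c + g) (d + g) := by
  obtain ⟨u, u', v', v, hu, hu', hv', hv, hsum, h1, h2, h3, h4, h5, h6⟩ := H
  refine ⟨Fin.snoc u (-1), Fin.snoc u' (-1), Fin.snoc v' (-1), Fin.snoc v (-1),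
    snoc_mem_level_snoc_neg_one hu, snoc_mem_level_snoc_neg_one hu',
    snoc_mem_level_snoc_neg_one hv', snoc_mem_level_snoc_neg_one hv,
    by rw [Fin.snoc_add_snoc, Fin.snoc_add_snoc, hsum], ?_⟩
  simp_all

theorem snoc_one_neg_one (H : Realizable h a b c d) :
    Realizable (Fin.snoc h g) a b (c + g) (d + g) := by
  obtain ⟨u, u', v', v, hu, hu', hv', hv, hsum, h1, -, -, -, -, h6⟩ := H
  refine ⟨Fin.snoc u 1, Fin.snoc u' 1, Fin.snoc v' (-1), Fin.snoc v (-1),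
    snoc_mem_level_snoc_one hu, snoc_mem_level_snoc_one hu',
    snoc_mem_level_snoc_neg_one hv', snoc_mem_level_snoc_neg_one hv,
    by rw [Fin.snoc_add_snoc, Fin.snoc_add_snoc, hsum], ?_⟩
  simp_all

end Realizable

theorem realizable_snoc_of_nonempty {e f : ℤ} (he : (level h e).Nonempty)
    (hf : (level h f).Nonempty) (hef : e ≠ f) :
    Realizable (Fin.snoc h g) e (e + g) f (f + g) := by
  obtain ⟨x, hx⟩ := he
  obtain ⟨y, hy⟩ := hf
  have hxy := ne_of_mem_level hx hy hef
  refine ⟨Fin.snoc x 1, Fin.snoc x (-1), Fin.snoc y 1, Fin.snoc y (-1),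
    snoc_mem_level_snoc_one hx, snoc_mem_level_snoc_neg_one hx,
    snoc_mem_level_snoc_one hy, snoc_mem_level_snoc_neg_one hy,
    by rw [Fin.snoc_add_snoc, Fin.snoc_add_snoc, add_comm (1 : ℤ)], ?_⟩
  simp_all

theorem Primitive.level_nonempty_s9 (hp : Primitive h) {k : ℤ} (h0 : 0 ≤ k)
    (hk : k ≤ ∑ i, (h i : ℤ)) : (level h k).Nonempty := by
  rcases h0.eq_or_lt with rfl | h0
  · exact ⟨fun _ => 1, fun _ => .inl rfl, by simp⟩
  rcases hk.eq_or_lt with rfl | hk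
  · exact ⟨fun _ => -1, fun _ => .inr rfl, by simp only [mul_neg, mul_one, sum_neg_distrib]; ring⟩
  by_cases hkS : 2 * k ≤ ∑ i, (h i : ℤ)
  · obtain ⟨-, u', -, -, -, hu', -⟩ :=
      hp 0 k (∑ i, (h i : ℤ) - k) _ h0 (by omega) (by omega) rfl le_rfl (by omega)
    exact ⟨u', hu'⟩
  · obtain ⟨-, -, v', -, -, -, hv', -⟩ :=
      hp 0 (∑ i, (h i : ℤ) - k) k _ (by omega) (by omega) (by omega) rfl le_rfl (by omega)
    exact ⟨v', hv'⟩

theorem Primitive.realizable_of_lt (hp : Primitive h) {a b c d : ℤ} (hab : a < b) (hac : a < c)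
    (hd : d = b + c - a) (ha : 0 ≤ a) (hdS : d ≤ ∑ i, (h i : ℤ)) : Realizable h a b c d := by
  rcases le_total b c with hbc | hcb
  · exact hp a b c d hab hbc (by omega) hd ha hdS
  · exact (hp a c b d hac hcb (by omega) (by omega) ha hdS).transpose

/-- appending an entry `g₀ ≤ |h|/2 + 1` to a primitive vector yields a
primitive vector. -/
theorem primitive_snoc (n : ℕ) (h : Fin n → ℕ) (hp : Primitive h) (g0 : ℕ)
    (hg : (g0 : ℚ) ≤ (∑ i, (h i : ℚ)) / 2 + 1) :
    Primitive (Fin.snoc h g0) := by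
  intro a b c d hab hbc hcd hd ha hdS
  rw [sum_snoc_cast] at hdS
  have hg : 2 * (g0 : ℤ) ≤ ∑ i, (h i : ℤ) + 2 := by qify; linarith
  by_cases hdS' : d ≤ ∑ i, (h i : ℤ)
  · exact (hp a b c d hab hbc hcd hd ha hdS').snoc_one
  by_cases hga : g0 ≤ a
  · convert (hp (a - g0) (b - g0) (c - g0) (d - g0) ?_ ?_ ?_ ?_ ?_ ?_).snoc_neg_one
      using 1 <;> omega
  by_cases hgc : a + g0 < c
  · convert (hp.realizable_of_lt (a := a) (b := b) (c := c - g0) (d := d - g0)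
      ?_ ?_ ?_ ?_ ?_).snoc_one_neg_one using 1 <;> omega
  by_cases hgb : a + g0 < b
  · convert (hp.realizable_of_lt (a := a) (b := b - g0) (c := c) (d := d - g0)
      ?_ ?_ ?_ ?_ ?_).transpose.snoc_one_neg_one.transpose using 1 <;> omega
  by_cases hgb' : b = a + g0
  · convert realizable_snoc_of_nonempty (hp.level_nonempty_s9 (k := a) ?_ ?_)
      (hp.level_nonempty_s9 (k := c) ?_ ?_) ?_ using 1 <;> omega
  by_cases hgc' : c = a + g0
  · convert (realizable_snoc_of_nonempty (hp.level_nonempty_s9 (k := a) ?_ ?_)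
      (hp.level_nonempty_s9 (k := b) ?_ ?_) ?_).transpose using 1 <;> omega
  convert (hp.realizable_of_lt (a := b - g0) (b := a) (c := d - g0) (d := c)
    ?_ ?_ ?_ ?_ ?_).swap_columns.transpose.snoc_one_neg_one.transpose using 1 <;> omega
end

section
/- Suppose h ∈ ℕ^n and a, b are levels with S_a(h) embedded in S_b(h) (written S_a ↪ S_b). Then the affine span of S_a(h) in ℝ^n is a translate of an affine subspace parallel to (i.e., with direction space contained in that of) the affine span of S_b(h); in particular dim(aff span S_a) ≤ dim(aff span S_b). -/
open Finset

/-- Cast a cube vertex to a point of `ℝ^n`. -/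
def toR {n : ℕ} (v : Fin n → ℤ) : Fin n → ℝ := fun i => (v i : ℝ)

/-- `S_a(h)` is embedded in `S_b(h)`: there is a spanning tree of the complete graph
on `S_a(h)` each of whose edges `{u, u'}` extends to a rectangle `u + v = u' + v'`
with `v, v' ∈ S_b(h)`. -/
def Embedded {n : ℕ} (h : Fin n → ℕ) (a b : ℤ) : Prop :=
  ∃ G : SimpleGraph (level h a), G.IsTree ∧
    ∀ u u' : level h a, G.Adj u u' →
      ∃ v v' : Fin n → ℤ, v ∈ level h b ∧ v' ∈ level h b ∧
        (u : Fin n → ℤ) + v = (u' : Fin n → ℤ) + v'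

/-!
In a rectangle `u + v = u' + v'` the side `u - u'` equals the opposite side `v' - v`, so every
edge of the spanning tree of `S_a` is a difference of two points of `S_b`. Since the tree is
connected, any difference `u - u'` of points of `S_a` is a sum of edge differences along a path,
hence lies in the direction of the affine span of `S_b`.
-/

theorem SimpleGraph.Reachable.sub_mem_of_adj {V E : Type*} [AddGroup E] {G : SimpleGraph V}
    {S : AddSubgroup E} {f : V → E} (hadj : ∀ ⦃x y⦄, G.Adj x y → f x - f y ∈ S) {u v : V}
    (huv : G.Reachable u v) : f u - f v ∈ S := by
  obtain ⟨w⟩ := huv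
  induction w with
  | nil => simp
  | @cons x y z hxy _ ih => simpa [sub_add_sub_cancel] using S.add_mem (hadj hxy) ih

theorem vectorSpan_le_of_vsub_mem {k V P : Type*} [Ring k] [AddCommGroup V] [Module k V]
    [AddTorsor V P] {s : Set P} {K : Submodule k V} (h : ∀ p ∈ s, ∀ q ∈ s, p -ᵥ q ∈ K) :
    vectorSpan k s ≤ K :=
  Submodule.span_le.2 <| by
    rintro _ ⟨p, hp, q, hq, rfl⟩
    exact h p hp q hq

theorem toR_sub {n : ℕ} (u v : Fin n → ℤ) : toR (u - v) = toR u - toR v := by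
  ext i
  simp [toR]

theorem toR_sub_mem_vectorSpan_of_add_eq_add {n : ℕ} {s : Set (Fin n → ℤ)}
    {u u' v v' : Fin n → ℤ} (hv : v ∈ s) (hv' : v' ∈ s) (hrect : u + v = u' + v') :
    toR u - toR u' ∈ vectorSpan ℝ (toR '' s) := by
  rw [← toR_sub, sub_eq_sub_iff_add_eq_add.2 (hrect.trans (add_comm _ _)), toR_sub]
  exact vsub_mem_vectorSpan ℝ (Set.mem_image_of_mem toR hv') (Set.mem_image_of_mem toR hv)

/-- if `S_a ↪ S_b` then the affine span of `S_a` is parallel to (its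
direction is contained in that of) the affine span of `S_b`; in particular its
dimension is at most that of the span of `S_b`. -/
theorem embedded_parallel (n : ℕ) (h : Fin n → ℕ) (a b : ℤ)
    (hab : Embedded h a b) :
    (affineSpan ℝ (toR '' level h a)).direction ≤
      (affineSpan ℝ (toR '' level h b)).direction ∧
    Module.finrank ℝ (affineSpan ℝ (toR '' level h a)).direction ≤
      Module.finrank ℝ (affineSpan ℝ (toR '' level h b)).direction := by
  obtain ⟨G, hG, hrect⟩ := hab
  have hdir : (affineSpan ℝ (toR '' level h a)).direction ≤
      (affineSpan ℝ (toR '' level h b)).direction := by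
    rw [direction_affineSpan, direction_affineSpan]
    refine vectorSpan_le_of_vsub_mem ?_
    rintro _ ⟨u, hu, rfl⟩ _ ⟨u', hu', rfl⟩
    refine SimpleGraph.Reachable.sub_mem_of_adj (S := (vectorSpan ℝ _).toAddSubgroup)
      (f := fun x : level h a => toR (x : Fin n → ℤ)) (fun x y hxy => ?_)
      (hG.connected ⟨u, hu⟩ ⟨u', hu'⟩)
    obtain ⟨v, v', hv, hv', hsum⟩ := hrect x y hxy
    exact toR_sub_mem_vectorSpan_of_add_eq_add hv hv' hsum
  exact ⟨hdir, Submodule.finrank_mono hdir⟩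
end
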